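/- arXiv:2503.11505 — 2 statements merged into one kernel-verified Lean document; each statement's English description precedes it below -/
import Mathlib

section
/- Let f : ℝ → ℝ be twice continuously differentiable on [a,b], attaining a strict global maximum at c ∈ (a,b) with f''(c) < 0, and let h : ℝ → ℝ be continuous with h(c) ≠ 0. Then as λ → ∞, the integral ∫_a^b h(x) exp(λ f(x)) dx is asymptotically equivalent to h(c) exp(λ f(c)) √(2π / (−λ f''(c))), i.e. the ratio of the two tends to 1. -/
open Real MeasureTheory intervalIntegral Filter Set

lemma my_tendsto_sqrt_atTop : Tendsto Real.sqrt atTop atTop :=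
  tendsto_atTop_atTop_of_monotone (fun _ _ h => Real.sqrt_le_sqrt h)
    (fun b => ⟨b^2, by rw [Real.sqrt_sq_eq_abs]; exact le_abs_self b⟩)

lemma gauss_trunc {p δ : ℝ} (hp : 0 < p) (hδ : 0 < δ) (c : ℝ) :
    Tendsto (fun lam : ℝ => Real.sqrt lam * ∫ x in (c-δ)..(c+δ), Real.exp (-(lam * p) * (x-c)^2))
      atTop (nhds (Real.sqrt (π / p))) := by
  have key : Tendsto (fun lam : ℝ => ∫ t in (-(δ * Real.sqrt lam))..(δ * Real.sqrt lam),
      Real.exp (-p * t^2)) atTop (nhds (Real.sqrt (π / p))) := by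
    rw [← integral_gaussian p]
    refine intervalIntegral_tendsto_integral (integrable_exp_neg_mul_sq hp) ?_ ?_
    · exact tendsto_neg_atBot_iff.2 ((my_tendsto_sqrt_atTop.const_mul_atTop hδ))
    · exact my_tendsto_sqrt_atTop.const_mul_atTop hδ
  refine key.congr' ?_
  filter_upwards [eventually_gt_atTop 0] with lam hlam
  have hs : Real.sqrt lam ≠ 0 := by positivity
  rw [intervalIntegral.integral_comp_sub_right (fun x => Real.exp (-(lam*p) * x^2)) c]
  have : ∀ x : ℝ, Real.exp (-(lam*p) * x^2) = Real.exp (-p * (Real.sqrt lam * x)^2) := by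
    intro x
    rw [mul_pow, Real.sq_sqrt hlam.le]
    ring_nf
  simp_rw [this]
  rw [intervalIntegral.integral_comp_mul_left (fun t => Real.exp (-p * t^2)) hs]
  rw [smul_eq_mul, ← mul_assoc, mul_inv_cancel₀ hs, one_mul]
  congr 1 <;> ring

lemma lin_integral (s c x : ℝ) : ∫ t in c..x, s * (t - c) = s * (x - c)^2 / 2 := by
  have h1 : ∀ t ∈ uIcc c x, HasDerivAt (fun t => s * (t - c)^2 / 2) (s * (t - c)) t := by
    intro t _
    have : HasDerivAt (fun t : ℝ => (t - c)) 1 t := (hasDerivAt_id t).sub_const c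
    have h2 := (this.pow 2).const_mul s
    have h3 := h2.div_const 2
    exact h3.congr_deriv (by ring)
  rw [intervalIntegral.integral_eq_sub_of_hasDerivAt h1 (by
    apply ContinuousOn.intervalIntegrable; fun_prop)]
  ring

lemma quad_upper {f f1 f2 : ℝ → ℝ} {c δ s : ℝ}
    (hd1 : ∀ x ∈ Icc (c-δ) (c+δ), HasDerivAt f (f1 x) x)
    (hd2 : ∀ x ∈ Icc (c-δ) (c+δ), HasDerivAt f1 (f2 x) x)
    (hcont2 : ContinuousOn f2 (Icc (c-δ) (c+δ)))
    (hf1c : f1 c = 0) (hδ : 0 ≤ δ)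
    (hbd : ∀ x ∈ Icc (c-δ) (c+δ), f2 x ≤ s) :
    ∀ x ∈ Icc (c-δ) (c+δ), f x - f c ≤ s * (x-c)^2 / 2 := by
  have hcmem : c ∈ Icc (c-δ) (c+δ) := by constructor <;> linarith
  have hsub : ∀ x ∈ Icc (c-δ) (c+δ), uIcc c x ⊆ Icc (c-δ) (c+δ) := fun x hx =>
    uIcc_subset_Icc hcmem hx
  have hcont1 : ContinuousOn f1 (Icc (c-δ) (c+δ)) := fun t ht =>
    (hd2 t ht).continuousAt.continuousWithinAt
  -- f1 bounds
  have key1 : ∀ x ∈ Icc (c-δ) (c+δ), c ≤ x → f1 x ≤ s * (x - c) := by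
    intro x hx hcx
    have hIcc : Icc c x ⊆ Icc (c-δ) (c+δ) := Icc_subset_Icc hcmem.1 hx.2
    have hftc : ∫ t in c..x, f2 t = f1 x - f1 c := by
      apply intervalIntegral.integral_eq_sub_of_hasDerivAt
      · intro t ht; exact hd2 t (hsub x hx ht)
      · exact ((hcont2.mono hIcc).intervalIntegrable_of_Icc hcx)
    have hmono : ∫ t in c..x, f2 t ≤ ∫ t in c..x, s := by
      apply intervalIntegral.integral_mono_on hcx
        ((hcont2.mono hIcc).intervalIntegrable_of_Icc hcx) (intervalIntegrable_const)
      intro t ht; exact hbd t (hIcc ht)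
    rw [hftc, hf1c] at hmono
    rw [intervalIntegral.integral_const, smul_eq_mul] at hmono
    linarith
  have key1' : ∀ x ∈ Icc (c-δ) (c+δ), x ≤ c → s * (x - c) ≤ f1 x := by
    intro x hx hcx
    have hIcc : Icc x c ⊆ Icc (c-δ) (c+δ) := Icc_subset_Icc hx.1 hcmem.2
    have hftc : ∫ t in x..c, f2 t = f1 c - f1 x := by
      apply intervalIntegral.integral_eq_sub_of_hasDerivAt
      · intro t ht; rw [uIcc_comm] at ht; exact hd2 t (hsub x hx ht)
      · exact ((hcont2.mono hIcc).intervalIntegrable_of_Icc hcx)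
    have hmono : ∫ t in x..c, f2 t ≤ ∫ t in x..c, s := by
      apply intervalIntegral.integral_mono_on hcx
        ((hcont2.mono hIcc).intervalIntegrable_of_Icc hcx) (intervalIntegrable_const)
      intro t ht; exact hbd t (hIcc ht)
    rw [hftc, hf1c, intervalIntegral.integral_const, smul_eq_mul] at hmono
    linarith [hmono]
  intro x hx
  rcases le_total c x with hcx | hcx
  · -- integrate f1 from c to x
    have hftc : ∫ t in c..x, f1 t = f x - f c := by
      apply intervalIntegral.integral_eq_sub_of_hasDerivAt
      · intro t ht; exact hd1 t (hsub x hx ht)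
      · exact ((hcont1.mono (Icc_subset_Icc hcmem.1 hx.2)).intervalIntegrable_of_Icc hcx)
    have hmono : ∫ t in c..x, f1 t ≤ ∫ t in c..x, s * (t - c) := by
      apply intervalIntegral.integral_mono_on hcx
        ((hcont1.mono (Icc_subset_Icc hcmem.1 hx.2)).intervalIntegrable_of_Icc hcx)
        (by apply ContinuousOn.intervalIntegrable; fun_prop)
      intro t ht
      exact key1 t (Icc_subset_Icc hcmem.1 hx.2 ht) ht.1
    rw [hftc, lin_integral] at hmono
    linarith
  · have hftc : ∫ t in x..c, f1 t = f c - f x := by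
      apply intervalIntegral.integral_eq_sub_of_hasDerivAt
      · intro t ht; rw [uIcc_comm] at ht; exact hd1 t (hsub x hx ht)
      · exact ((hcont1.mono (Icc_subset_Icc hx.1 hcmem.2)).intervalIntegrable_of_Icc hcx)
    have hmono : ∫ t in x..c, s * (t - c) ≤ ∫ t in x..c, f1 t := by
      apply intervalIntegral.integral_mono_on hcx
        (by apply ContinuousOn.intervalIntegrable; fun_prop)
        ((hcont1.mono (Icc_subset_Icc hx.1 hcmem.2)).intervalIntegrable_of_Icc hcx)
      intro t ht
      exact key1' t (Icc_subset_Icc hx.1 hcmem.2 ht) ht.2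
    have hlin : ∫ t in x..c, s * (t - c) = - (s * (x-c)^2/2) := by
      rw [intervalIntegral.integral_symm, lin_integral]
    rw [hftc, hlin] at hmono
    linarith

lemma sqrt_exp_decay {η : ℝ} (hη : 0 < η) :
    Tendsto (fun lam : ℝ => Real.sqrt lam * Real.exp (-(η * lam))) atTop (nhds 0) := by
  have h1 : Tendsto (fun lam : ℝ => (1/η) * ((η * lam) ^ 1 * Real.exp (-(η * lam))))
      atTop (nhds 0) := by
    have := (tendsto_pow_mul_exp_neg_atTop_nhds_zero 1).comp
      (Tendsto.const_mul_atTop hη tendsto_id)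
    simpa using this.const_mul (1/η)
  refine tendsto_of_tendsto_of_tendsto_of_le_of_le' tendsto_const_nhds h1 ?_ ?_
  · filter_upwards [eventually_ge_atTop (0:ℝ)] with lam hlam
    positivity
  · filter_upwards [eventually_ge_atTop (1:ℝ)] with lam hlam
    have hs : Real.sqrt lam ≤ lam := by
      nlinarith [Real.sq_sqrt (by linarith : (0:ℝ) ≤ lam), Real.sqrt_nonneg lam]
    have : (1/η) * ((η * lam) ^ 1 * Real.exp (-(η * lam))) = lam * Real.exp (-(η*lam)) := by
      field_simp
    rw [this]
    exact mul_le_mul_of_nonneg_right hs (Real.exp_pos _).le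

lemma keyPos (a b c : ℝ) (f h : ℝ → ℝ) (hab : a < b) (hc : c ∈ Set.Ioo a b)
    (U : Set ℝ) (hU : IsOpen U) (hIcc : Set.Icc a b ⊆ U)
    (hf : ContDiffOn ℝ 2 f U)
    (hmax : ∀ x ∈ Set.Icc a b, x ≠ c → f x < f c)
    (hf'' : deriv (deriv f) c < 0)
    (hh : Continuous h) (hhc : 0 < h c) :
    Tendsto (fun lam : ℝ => Real.sqrt lam * ∫ x in a..b, h x * Real.exp (lam * (f x - f c)))
      atTop (nhds (h c * Real.sqrt (2 * π / (-deriv (deriv f) c)))) := by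
  set k : ℝ := -deriv (deriv f) c with hkdef
  have hk : 0 < k := by simp only [hkdef]; linarith
  have hcU : c ∈ U := hIcc ⟨hc.1.le, hc.2.le⟩
  have hfd : DifferentiableOn ℝ f U := hf.differentiableOn (by norm_num)
  have hd1 : ∀ x ∈ U, HasDerivAt f (deriv f x) x := fun x hx =>
    ((hfd x hx).differentiableAt (hU.mem_nhds hx)).hasDerivAt
  have hf' : ContDiffOn ℝ 1 (deriv f) U := hf.deriv_of_isOpen hU (by norm_num)
  have hfd' : DifferentiableOn ℝ (deriv f) U := hf'.differentiableOn (by norm_num)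
  have hd2 : ∀ x ∈ U, HasDerivAt (deriv f) (deriv (deriv f) x) x := fun x hx =>
    ((hfd' x hx).differentiableAt (hU.mem_nhds hx)).hasDerivAt
  have hcont2 : ContinuousOn (deriv (deriv f)) U :=
    hf'.continuousOn_deriv_of_isOpen hU (by norm_num)
  have hcont2c : ContinuousAt (deriv (deriv f)) c := hcont2.continuousAt (hU.mem_nhds hcU)
  have hf'c : deriv f c = 0 := by
    have hloc : IsLocalMax f c := by
      refine Filter.eventually_of_mem (isOpen_Ioo.mem_nhds hc) (fun x hx => ?_)
      rcases eq_or_ne x c with rfl | hne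
      · exact le_rfl
      · exact (hmax x ⟨hx.1.le, hx.2.le⟩ hne).le
    exact hloc.deriv_eq_zero
  obtain ⟨C, hC⟩ := isCompact_Icc.exists_bound_of_continuousOn (f := h) hh.continuousOn
  have hC0 : 0 ≤ C := le_trans (norm_nonneg _) (hC a ⟨le_rfl, hab.le⟩)
  set L : ℝ := h c * Real.sqrt (2 * π / k) with hLdef
  have hfc : ContinuousOn f (Icc a b) := hf.continuousOn.mono hIcc
  have hint : ∀ (lam a' b' : ℝ), a' ∈ Icc a b → b' ∈ Icc a b →
      IntervalIntegrable (fun x => h x * Real.exp (lam * (f x - f c))) volume a' b' := by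
    intro lam a' b' ha' hb'
    apply ContinuousOn.intervalIntegrable
    apply ContinuousOn.mul (hh.continuousOn)
    apply Real.continuous_exp.comp_continuousOn
    exact continuousOn_const.mul ((hfc.mono (uIcc_subset_Icc ha' hb')).sub continuousOn_const)
  apply Metric.tendsto_nhds.2
  intro ρ hρ
  -- choose ε
  obtain ⟨ε, hεpos, hε0, hεk, hεh, hφε, hψε⟩ :
      ∃ ε : ℝ, ε ∈ Ioi (0:ℝ) ∧ 0 < ε ∧ ε < k ∧ ε < h c ∧
      (h c + ε) * Real.sqrt (2*π/(k-ε)) < L + ρ ∧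
      L - ρ < (h c - ε) * Real.sqrt (2*π/(k+ε)) := by
    have hφcont : ContinuousAt (fun ε : ℝ => (h c + ε) * Real.sqrt (2*π/(k-ε))) 0 := by
      apply ContinuousAt.mul (by fun_prop)
      apply Real.continuous_sqrt.continuousAt.comp
      exact ContinuousAt.div continuousAt_const (by fun_prop) (by simpa using hk.ne')
    have hψcont : ContinuousAt (fun ε : ℝ => (h c - ε) * Real.sqrt (2*π/(k+ε))) 0 := by
      apply ContinuousAt.mul (by fun_prop)
      apply Real.continuous_sqrt.continuousAt.comp
      exact ContinuousAt.div continuousAt_const (by fun_prop) (by simpa using hk.ne')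
    have hφt := hφcont.tendsto
    have hψt := hψcont.tendsto
    simp only [sub_zero, add_zero] at hφt hψt
    have e1 : ∀ᶠ ε in nhds (0:ℝ), (h c + ε) * Real.sqrt (2*π/(k-ε)) < L + ρ :=
      hφt.eventually_lt_const (by simp only [hLdef]; linarith)
    have e2 : ∀ᶠ ε in nhds (0:ℝ), L - ρ < (h c - ε) * Real.sqrt (2*π/(k+ε)) :=
      hψt.eventually_const_lt (by simp only [hLdef]; linarith)
    have e3 : ∀ᶠ ε in nhds (0:ℝ), ε < k := eventually_lt_nhds hk
    have e4 : ∀ᶠ ε in nhds (0:ℝ), ε < h c := eventually_lt_nhds hhc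
    have e5 : ∀ᶠ ε in nhdsWithin (0:ℝ) (Ioi 0), ε ∈ Ioi (0:ℝ) ∧ 0 < ε ∧ ε < k ∧ ε < h c ∧
        (h c + ε) * Real.sqrt (2*π/(k-ε)) < L + ρ ∧
        L - ρ < (h c - ε) * Real.sqrt (2*π/(k+ε)) := by
      have e0 : ∀ᶠ ε in nhdsWithin (0:ℝ) (Ioi 0), ε ∈ Ioi (0:ℝ) := self_mem_nhdsWithin
      filter_upwards [e0, (e1.and (e2.and (e3.and e4))).filter_mono nhdsWithin_le_nhds]
        with ε hε h'
      exact ⟨hε, hε, h'.2.2.1, h'.2.2.2, h'.1, h'.2.1⟩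
    exact e5.exists
  -- choose δ
  obtain ⟨r, hr0, hball⟩ : ∃ r > 0, ∀ y ∈ Metric.ball c r, y ∈ Ioo a b ∧ y ∈ U ∧
      |deriv (deriv f) y - deriv (deriv f) c| < ε ∧ |h y - h c| < ε := by
    rw [← Metric.eventually_nhds_iff_ball]
    have m1 : ∀ᶠ x in nhds c, x ∈ Ioo a b := isOpen_Ioo.eventually_mem hc
    have m2 : ∀ᶠ x in nhds c, x ∈ U := hU.eventually_mem hcU
    have m3 : ∀ᶠ x in nhds c, |deriv (deriv f) x - deriv (deriv f) c| < ε := by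
      have := Metric.tendsto_nhds.1 hcont2c ε hε0
      simpa [Real.dist_eq] using this
    have m4 : ∀ᶠ x in nhds c, |h x - h c| < ε := by
      have := Metric.tendsto_nhds.1 (hh.continuousAt (x := c)) ε hε0
      simpa [Real.dist_eq] using this
    filter_upwards [m1, m2, m3, m4] with x h1 h2 h3 h4
    exact ⟨h1, h2, h3, h4⟩
  set δ : ℝ := r/2 with hδdef
  have hδ0 : 0 < δ := by positivity
  have hδmem : ∀ x ∈ Icc (c-δ) (c+δ), x ∈ Ioo a b ∧ x ∈ U ∧
      |deriv (deriv f) x - deriv (deriv f) c| < ε ∧ |h x - h c| < ε := by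
    intro x hx
    apply hball
    rw [Metric.mem_ball, Real.dist_eq]
    have := hx.1; have := hx.2
    rw [abs_lt]; constructor <;> simp only [hδdef] at * <;> linarith
  have hacδ : a < c - δ := (hδmem (c-δ) ⟨le_rfl, by linarith⟩).1.1
  have hcδb : c + δ < b := (hδmem (c+δ) ⟨by linarith, le_rfl⟩).1.2
  have hsubab : Icc (c-δ) (c+δ) ⊆ Icc a b := fun x hx =>
    ⟨((hδmem x hx).1.1).le, ((hδmem x hx).1.2).le⟩
  have hsubU : Icc (c-δ) (c+δ) ⊆ U := fun x hx => (hδmem x hx).2.1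
  -- quadratic bounds
  have hf''c : deriv (deriv f) c = -k := by simp [hkdef]
  have hupq : ∀ x ∈ Icc (c-δ) (c+δ), f x - f c ≤ (-(k-ε)) * (x-c)^2 / 2 := by
    apply quad_upper (fun x hx => hd1 x (hsubU hx)) (fun x hx => hd2 x (hsubU hx))
      (hcont2.mono hsubU) hf'c hδ0.le
    intro x hx
    have := (hδmem x hx).2.2.1
    rw [abs_lt, hf''c] at this
    linarith [this.2]
  have hloq : ∀ x ∈ Icc (c-δ) (c+δ), -((k+ε) * (x-c)^2 / 2) ≤ f x - f c := by
    have := quad_upper (f := fun x => -f x) (f1 := fun x => -deriv f x)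
      (f2 := fun x => -deriv (deriv f) x) (c := c) (δ := δ) (s := k+ε)
      (fun x hx => (hd1 x (hsubU hx)).neg) (fun x hx => (hd2 x (hsubU hx)).neg)
      ((hcont2.mono hsubU).neg) (by simp [hf'c]) hδ0.le
      (fun x hx => by
        have hq := (hδmem x hx).2.2.1
        rw [abs_lt, hf''c] at hq
        show -deriv (deriv f) x ≤ k + ε
        linarith [hq.1])
    intro x hx
    have := this x hx
    linarith
  have hhl : ∀ x ∈ Icc (c-δ) (c+δ), h c - ε ≤ h x ∧ h x ≤ h c + ε := by
    intro x hx
    have := (hδmem x hx).2.2.2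
    rw [abs_lt] at this
    constructor <;> linarith [this.1, this.2]
  -- far-field η
  obtain ⟨x₁, hx₁, hm₁⟩ := isCompact_Icc.exists_isMaxOn (nonempty_Icc.2 (by linarith : a ≤ c - δ))
    (hfc.mono (Icc_subset_Icc le_rfl (by linarith)))
  obtain ⟨x₂, hx₂, hm₂⟩ := isCompact_Icc.exists_isMaxOn (nonempty_Icc.2 (by linarith : c + δ ≤ b))
    (hfc.mono (Icc_subset_Icc (by linarith) le_rfl))
  have hfx₁ : f x₁ < f c := hmax x₁ ⟨hx₁.1, by linarith [hx₁.2]⟩ (by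
    intro hxc; rw [hxc] at hx₁; linarith [hx₁.2])
  have hfx₂ : f x₂ < f c := hmax x₂ ⟨by linarith [hx₂.1], hx₂.2⟩ (by
    intro hxc; rw [hxc] at hx₂; linarith [hx₂.1])
  set η : ℝ := min (f c - f x₁) (f c - f x₂) with hηdef
  have hη : 0 < η := lt_min (by linarith) (by linarith)
  have hfar₁ : ∀ x ∈ Icc a (c-δ), f x - f c ≤ -η := by
    intro x hx
    have h1 := hm₁ hx
    have h2 : η ≤ f c - f x₁ := min_le_left _ _
    simp only [mem_setOf_eq] at h1
    linarith
  have hfar₂ : ∀ x ∈ Icc (c+δ) b, f x - f c ≤ -η := by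
    intro x hx
    have h1 := hm₂ hx
    have h2 : η ≤ f c - f x₂ := min_le_right _ _
    simp only [mem_setOf_eq] at h1
    linarith
  -- decay term
  set D : ℝ → ℝ := fun lam => (C * (b - a)) * (Real.sqrt lam * Real.exp (-(η * lam))) with hDdef
  have hD0 : Tendsto D atTop (nhds 0) := by
    simpa using (sqrt_exp_decay hη).const_mul (C * (b-a))
  have hDbound : ∀ (lam : ℝ), 0 ≤ lam → ∀ (a' b' : ℝ), a' ∈ Icc a b → b' ∈ Icc a b → a' ≤ b' →
      (∀ x ∈ Icc a' b', f x - f c ≤ -η) →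
      |Real.sqrt lam * ∫ x in a'..b', h x * Real.exp (lam * (f x - f c))| ≤ D lam := by
    intro lam hlam a' b' ha' hb' hab' hfb
    rw [abs_mul, abs_of_nonneg (Real.sqrt_nonneg _)]
    have hb : ∀ x ∈ uIoc a' b', ‖h x * Real.exp (lam * (f x - f c))‖ ≤ C * Real.exp (-(η*lam)) := by
      intro x hx
      rw [uIoc_of_le hab'] at hx
      have hxab : x ∈ Icc a b := ⟨ha'.1.trans hx.1.le, hx.2.trans hb'.2⟩
      rw [norm_mul, Real.norm_eq_abs, Real.norm_eq_abs, Real.abs_exp]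
      have he : Real.exp (lam * (f x - f c)) ≤ Real.exp (-(η*lam)) := by
        apply Real.exp_le_exp.2
        have := mul_le_mul_of_nonneg_left (hfb x ⟨hx.1.le, hx.2⟩) hlam
        linarith
      exact mul_le_mul (hC x hxab) he (Real.exp_pos _).le hC0
    have hnorm := intervalIntegral.norm_integral_le_of_norm_le_const hb
    rw [Real.norm_eq_abs] at hnorm
    have hba' : |b' - a'| ≤ b - a := by
      rw [abs_of_nonneg (by linarith)]
      have := ha'.1; have := hb'.2; linarith
    have hstep : |∫ x in a'..b', h x * Real.exp (lam * (f x - f c))| ≤ C * (b-a) * Real.exp (-(η*lam)) := by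
      calc |∫ x in a'..b', h x * Real.exp (lam * (f x - f c))|
          ≤ C * Real.exp (-(η*lam)) * |b' - a'| := hnorm
        _ = C * |b' - a'| * Real.exp (-(η*lam)) := by ring
        _ ≤ C * (b-a) * Real.exp (-(η*lam)) := by
            apply mul_le_mul_of_nonneg_right _ (Real.exp_pos _).le
            exact mul_le_mul_of_nonneg_left hba' hC0
    calc Real.sqrt lam * |∫ x in a'..b', h x * Real.exp (lam * (f x - f c))|
        ≤ Real.sqrt lam * (C * (b-a) * Real.exp (-(η*lam))) :=
          mul_le_mul_of_nonneg_left hstep (Real.sqrt_nonneg _)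
      _ = D lam := by simp only [hDdef]; ring
  set p₁ : ℝ := (k-ε)/2 with hp₁def
  set p₂ : ℝ := (k+ε)/2 with hp₂def
  have hp₁ : 0 < p₁ := by simp only [hp₁def]; linarith
  have hp₂ : 0 < p₂ := by simp only [hp₂def]; linarith
  have hsq₁ : Real.sqrt (π/p₁) = Real.sqrt (2*π/(k-ε)) := by
    congr 1; rw [hp₁def]; field_simp
  have hsq₂ : Real.sqrt (π/p₂) = Real.sqrt (2*π/(k+ε)) := by
    congr 1; rw [hp₂def]; field_simp
  have ha_ab : a ∈ Icc a b := ⟨le_rfl, hab.le⟩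
  have hb_ab : b ∈ Icc a b := ⟨hab.le, le_rfl⟩
  have hcδ1 : c - δ ∈ Icc a b := ⟨by linarith, by linarith⟩
  have hcδ2 : c + δ ∈ Icc a b := ⟨by linarith, by linarith⟩
  have hsplit : ∀ lam : ℝ, (∫ x in a..b, h x * Real.exp (lam * (f x - f c))) =
      (∫ x in a..(c-δ), h x * Real.exp (lam * (f x - f c))) +
      (∫ x in (c-δ)..(c+δ), h x * Real.exp (lam * (f x - f c))) +
      (∫ x in (c+δ)..b, h x * Real.exp (lam * (f x - f c))) := by
    intro lam
    rw [intervalIntegral.integral_add_adjacent_intervals (hint lam a (c-δ) ha_ab hcδ1)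
        (hint lam (c-δ) (c+δ) hcδ1 hcδ2),
      intervalIntegral.integral_add_adjacent_intervals (hint lam a (c+δ) ha_ab hcδ2)
        (hint lam (c+δ) b hcδ2 hb_ab)]
  -- upper bound
  have hupper : ∀ᶠ lam in atTop,
      Real.sqrt lam * ∫ x in a..b, h x * Real.exp (lam * (f x - f c)) < L + ρ := by
    have hRHS : Tendsto (fun lam => D lam + ((h c + ε) *
        (Real.sqrt lam * ∫ x in (c-δ)..(c+δ), Real.exp (-(lam * p₁) * (x-c)^2)) + D lam))
        atTop (nhds (0 + ((h c + ε) * Real.sqrt (π/p₁) + 0))) :=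
      hD0.add (((gauss_trunc hp₁ hδ0 c).const_mul _).add hD0)
    have hlt : (0 : ℝ) + ((h c + ε) * Real.sqrt (π/p₁) + 0) < L + ρ := by
      rw [hsq₁]; simpa using hφε
    have hev := hRHS.eventually_lt_const hlt
    filter_upwards [hev, eventually_ge_atTop (0:ℝ)] with lam hev hlam
    have h1 := hDbound lam hlam a (c-δ) ha_ab hcδ1 (by linarith) hfar₁
    have h3 := hDbound lam hlam (c+δ) b hcδ2 hb_ab (by linarith) hfar₂
    have h2 : (∫ x in (c-δ)..(c+δ), h x * Real.exp (lam * (f x - f c))) ≤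
        (h c + ε) * ∫ x in (c-δ)..(c+δ), Real.exp (-(lam * p₁) * (x-c)^2) := by
      rw [← intervalIntegral.integral_const_mul]
      apply intervalIntegral.integral_mono_on (by linarith) (hint lam _ _ hcδ1 hcδ2)
        ((show Continuous (fun x => (h c + ε) * Real.exp (-(lam * p₁) * (x-c)^2)) by
          fun_prop).intervalIntegrable _ _)
      intro x hx
      have hhx := hhl x hx
      have hexp : Real.exp (lam * (f x - f c)) ≤ Real.exp (-(lam * p₁) * (x-c)^2) := by
        apply Real.exp_le_exp.2
        calc lam * (f x - f c) ≤ lam * ((-(k-ε)) * (x-c)^2/2) :=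
              mul_le_mul_of_nonneg_left (hupq x hx) hlam
          _ = -(lam * p₁) * (x-c)^2 := by rw [hp₁def]; ring
      exact mul_le_mul hhx.2 hexp (Real.exp_pos _).le (by linarith)
    have e2' : Real.sqrt lam * (∫ x in (c-δ)..(c+δ), h x * Real.exp (lam * (f x - f c))) ≤
        (h c + ε) * (Real.sqrt lam * ∫ x in (c-δ)..(c+δ), Real.exp (-(lam * p₁) * (x-c)^2)) := by
      calc Real.sqrt lam * (∫ x in (c-δ)..(c+δ), h x * Real.exp (lam * (f x - f c)))
          ≤ Real.sqrt lam * ((h c + ε) * ∫ x in (c-δ)..(c+δ), Real.exp (-(lam * p₁) * (x-c)^2)) :=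
            mul_le_mul_of_nonneg_left h2 (Real.sqrt_nonneg lam)
        _ = (h c + ε) * (Real.sqrt lam * ∫ x in (c-δ)..(c+δ), Real.exp (-(lam * p₁) * (x-c)^2)) := by
            ring
    have e1' : Real.sqrt lam * (∫ x in a..(c-δ), h x * Real.exp (lam * (f x - f c))) ≤ D lam :=
      (le_abs_self _).trans h1
    have e3' : Real.sqrt lam * (∫ x in (c+δ)..b, h x * Real.exp (lam * (f x - f c))) ≤ D lam :=
      (le_abs_self _).trans h3
    calc Real.sqrt lam * ∫ x in a..b, h x * Real.exp (lam * (f x - f c))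
        = Real.sqrt lam * (∫ x in a..(c-δ), h x * Real.exp (lam * (f x - f c))) +
          Real.sqrt lam * (∫ x in (c-δ)..(c+δ), h x * Real.exp (lam * (f x - f c))) +
          Real.sqrt lam * (∫ x in (c+δ)..b, h x * Real.exp (lam * (f x - f c))) := by
          rw [hsplit lam]; ring
      _ ≤ D lam + ((h c + ε) *
          (Real.sqrt lam * ∫ x in (c-δ)..(c+δ), Real.exp (-(lam * p₁) * (x-c)^2)) + D lam) := by
          linarith
      _ < L + ρ := hev
  -- lower bound
  have hlower : ∀ᶠ lam in atTop,
      L - ρ < Real.sqrt lam * ∫ x in a..b, h x * Real.exp (lam * (f x - f c)) := by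
    have hRHS : Tendsto (fun lam => -D lam + ((h c - ε) *
        (Real.sqrt lam * ∫ x in (c-δ)..(c+δ), Real.exp (-(lam * p₂) * (x-c)^2)) + -D lam))
        atTop (nhds (-0 + ((h c - ε) * Real.sqrt (π/p₂) + -0))) :=
      hD0.neg.add (((gauss_trunc hp₂ hδ0 c).const_mul _).add hD0.neg)
    have hgt : L - ρ < -(0:ℝ) + ((h c - ε) * Real.sqrt (π/p₂) + -0) := by
      rw [hsq₂]; simpa using hψε
    have hev := hRHS.eventually_const_lt hgt
    filter_upwards [hev, eventually_ge_atTop (0:ℝ)] with lam hev hlam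
    have h1 := hDbound lam hlam a (c-δ) ha_ab hcδ1 (by linarith) hfar₁
    have h3 := hDbound lam hlam (c+δ) b hcδ2 hb_ab (by linarith) hfar₂
    have h2 : (h c - ε) * (∫ x in (c-δ)..(c+δ), Real.exp (-(lam * p₂) * (x-c)^2)) ≤
        ∫ x in (c-δ)..(c+δ), h x * Real.exp (lam * (f x - f c)) := by
      rw [← intervalIntegral.integral_const_mul]
      apply intervalIntegral.integral_mono_on (by linarith)
        ((show Continuous (fun x => (h c - ε) * Real.exp (-(lam * p₂) * (x-c)^2)) by
          fun_prop).intervalIntegrable _ _)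
        (hint lam _ _ hcδ1 hcδ2)
      intro x hx
      have hhx := hhl x hx
      have hexp : Real.exp (-(lam * p₂) * (x-c)^2) ≤ Real.exp (lam * (f x - f c)) := by
        apply Real.exp_le_exp.2
        calc -(lam * p₂) * (x-c)^2 = lam * (-((k+ε) * (x-c)^2/2)) := by rw [hp₂def]; ring
          _ ≤ lam * (f x - f c) := mul_le_mul_of_nonneg_left (hloq x hx) hlam
      exact mul_le_mul hhx.1 hexp (Real.exp_pos _).le (by linarith)
    have e2' : (h c - ε) * (Real.sqrt lam * ∫ x in (c-δ)..(c+δ), Real.exp (-(lam * p₂) * (x-c)^2)) ≤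
        Real.sqrt lam * (∫ x in (c-δ)..(c+δ), h x * Real.exp (lam * (f x - f c))) := by
      calc (h c - ε) * (Real.sqrt lam * ∫ x in (c-δ)..(c+δ), Real.exp (-(lam * p₂) * (x-c)^2))
          = Real.sqrt lam * ((h c - ε) * ∫ x in (c-δ)..(c+δ), Real.exp (-(lam * p₂) * (x-c)^2)) := by
            ring
        _ ≤ Real.sqrt lam * (∫ x in (c-δ)..(c+δ), h x * Real.exp (lam * (f x - f c))) :=
            mul_le_mul_of_nonneg_left h2 (Real.sqrt_nonneg lam)
    have e1' : -D lam ≤ Real.sqrt lam * (∫ x in a..(c-δ), h x * Real.exp (lam * (f x - f c))) :=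
      neg_le_of_abs_le h1
    have e3' : -D lam ≤ Real.sqrt lam * (∫ x in (c+δ)..b, h x * Real.exp (lam * (f x - f c))) :=
      neg_le_of_abs_le h3
    have hfin : -D lam + ((h c - ε) *
        (Real.sqrt lam * ∫ x in (c-δ)..(c+δ), Real.exp (-(lam * p₂) * (x-c)^2)) + -D lam) ≤
        Real.sqrt lam * ∫ x in a..b, h x * Real.exp (lam * (f x - f c)) := by
      have : Real.sqrt lam * ∫ x in a..b, h x * Real.exp (lam * (f x - f c))
          = Real.sqrt lam * (∫ x in a..(c-δ), h x * Real.exp (lam * (f x - f c))) +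
            Real.sqrt lam * (∫ x in (c-δ)..(c+δ), h x * Real.exp (lam * (f x - f c))) +
            Real.sqrt lam * (∫ x in (c+δ)..b, h x * Real.exp (lam * (f x - f c))) := by
          rw [hsplit lam]; ring
      rw [this]
      linarith
    exact lt_of_lt_of_le hev hfin
  filter_upwards [hupper, hlower] with lam h1 h2
  rw [Real.dist_eq, abs_sub_lt_iff]
  constructor <;> linarith

lemma keyGen (a b c : ℝ) (f h : ℝ → ℝ) (hab : a < b) (hc : c ∈ Set.Ioo a b)
    (U : Set ℝ) (hU : IsOpen U) (hIcc : Set.Icc a b ⊆ U)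
    (hf : ContDiffOn ℝ 2 f U)
    (hmax : ∀ x ∈ Set.Icc a b, x ≠ c → f x < f c)
    (hf'' : deriv (deriv f) c < 0)
    (hh : Continuous h) (hhc : h c ≠ 0) :
    Tendsto (fun lam : ℝ => Real.sqrt lam * ∫ x in a..b, h x * Real.exp (lam * (f x - f c)))
      atTop (nhds (h c * Real.sqrt (2 * π / (-deriv (deriv f) c)))) := by
  rcases hhc.lt_or_gt with hneg | hpos
  · have base := keyPos a b c f (fun x => -h x) hab hc U hU hIcc hf hmax hf''
      hh.neg (by simpa using hneg)
    have base' : Tendsto (fun lam : ℝ =>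
        -(Real.sqrt lam * ∫ x in a..b, h x * Real.exp (lam * (f x - f c))))
        atTop (nhds (-h c * Real.sqrt (2 * π / (-deriv (deriv f) c)))) := by
      refine base.congr (fun lam => ?_)
      simp_rw [neg_mul, intervalIntegral.integral_neg, mul_neg]
    have := base'.neg
    simp only [neg_neg, neg_mul] at this
    exact this
  · exact keyPos a b c f h hab hc U hU hIcc hf hmax hf'' hh hpos

/-- Laplace's approximation: if `f` is C² on a neighborhood of `[a,b]`, attains a strict
global maximum at an interior point `c` with `f''(c) < 0`, and `h` is continuous with
`h c ≠ 0`, then `∫_a^b h x * exp (λ f x) dx` is asymptotically equivalent to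
`h c * exp (λ f c) * √(2π / (−λ f''(c)))` as `λ → ∞`. -/
theorem stmt_0 (a b c : ℝ) (f h : ℝ → ℝ) (hab : a < b) (hc : c ∈ Set.Ioo a b)
    (U : Set ℝ) (hU : IsOpen U) (hIcc : Set.Icc a b ⊆ U)
    (hf : ContDiffOn ℝ 2 f U)
    (hmax : ∀ x ∈ Set.Icc a b, x ≠ c → f x < f c)
    (hf'' : deriv (deriv f) c < 0)
    (hh : Continuous h) (hhc : h c ≠ 0) :
    Filter.Tendsto
      (fun lam : ℝ =>
        (∫ x in a..b, h x * Real.exp (lam * f x)) /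
          (h c * Real.exp (lam * f c) * Real.sqrt (2 * Real.pi / (-lam * deriv (deriv f) c))))
      Filter.atTop (nhds 1) := by
  have key := keyGen a b c f h hab hc U hU hIcc hf hmax hf'' hh hhc
  set k : ℝ := -deriv (deriv f) c with hkdef
  have hk : 0 < k := by simp only [hkdef]; linarith
  set L : ℝ := h c * Real.sqrt (2 * π / k) with hLdef
  have hsqpos : 0 < Real.sqrt (2 * π / k) :=
    Real.sqrt_pos.2 (div_pos (by positivity) hk)
  have hL : L ≠ 0 := mul_ne_zero hhc hsqpos.ne'
  have hdiv := key.div_const L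
  rw [div_self hL] at hdiv
  refine hdiv.congr' ?_
  filter_upwards [eventually_gt_atTop (0:ℝ)] with lam hlam
  have hslam : (0:ℝ) < Real.sqrt lam := Real.sqrt_pos.2 hlam
  have hnum : (∫ x in a..b, h x * Real.exp (lam * f x)) =
      Real.exp (lam * f c) * ∫ x in a..b, h x * Real.exp (lam * (f x - f c)) := by
    rw [← intervalIntegral.integral_const_mul]
    congr 1
    ext x
    rw [← mul_assoc, mul_comm (Real.exp (lam * f c)) (h x), mul_assoc, ← Real.exp_add]
    ring_nf
  have hden : Real.sqrt (2 * π / (-lam * deriv (deriv f) c)) = Real.sqrt (2 * π / k) / Real.sqrt lam := by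
    rw [show -lam * deriv (deriv f) c = lam * k by rw [hkdef]; ring]
    rw [show 2 * π / (lam * k) = (2 * π / k) / lam by field_simp]
    exact Real.sqrt_div (by positivity) lam
  rw [hnum, hden]
  have hexp : Real.exp (lam * f c) ≠ 0 := (Real.exp_pos _).ne'
  rw [hLdef]
  set g : ℝ := Real.sqrt (2 * π / k) with hgdef
  field_simp
end

section
/- Let γ : [0,1] → ℂ \ {0} be a continuously differentiable loop (γ(0) = γ(1)) and let b : ℂ \ {0} → ℂ \ {0} be holomorphic with b ∘ γ also a loop avoiding 0. If f : ℂ \ {0} → ℂ is continuous on the images of both loops and f(b(z)) = f(z) for all z on γ, and the loop b∘γ traverses the image of γ with reversed orientation, then ∮_γ f(z) dz/z = (1/2) ∮_γ (1/z − b'(z)/b(z)) f(z) dz. -/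
/-- Symmetrization identity for GBZ contour integrals: if `b` maps the loop `γ` to itself
with reversed orientation (via an orientation-reversing reparametrization `φ`) and
`f(b(z)) = f(z)` on the loop, then
`∮_γ f(z) dz/z = (1/2) ∮_γ (1/z − b'(z)/b(z)) f(z) dz`. -/
theorem stmt_13 (γ : ℝ → ℂ) (hγ : ContDiff ℝ 1 γ) (hloop : γ 0 = γ 1)
    (hγne : ∀ t, γ t ≠ 0)
    (b : ℂ → ℂ) (hb : DifferentiableOn ℂ b {(0 : ℂ)}ᶜ)
    (hbne : ∀ t ∈ Set.Icc (0 : ℝ) 1, b (γ t) ≠ 0)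
    (f : ℂ → ℂ)
    (hf : ContinuousOn f ((γ '' Set.Icc 0 1) ∪ ((b ∘ γ) '' Set.Icc 0 1)))
    (hfb : ∀ t ∈ Set.Icc (0 : ℝ) 1, f (b (γ t)) = f (γ t))
    (φ : ℝ → ℝ) (hφ : ContDiff ℝ 1 φ) (hφ0 : φ 0 = 1) (hφ1 : φ 1 = 0)
    (hanti : StrictAntiOn φ (Set.Icc 0 1))
    (hmaps : Set.MapsTo φ (Set.Icc 0 1) (Set.Icc 0 1))
    (hrev : ∀ t ∈ Set.Icc (0 : ℝ) 1, b (γ t) = γ (φ t)) :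
    (∫ t in (0 : ℝ)..1, f (γ t) * deriv γ t / γ t)
      = (1 / 2) * ∫ t in (0 : ℝ)..1,
          (deriv γ t / γ t - deriv b (γ t) * deriv γ t / b (γ t)) * f (γ t) := by
  have hIcc : Set.uIcc (0:ℝ) 1 = Set.Icc 0 1 := by
    rw [Set.uIcc_of_le]; norm_num
  have hγd : Differentiable ℝ γ := hγ.differentiable one_ne_zero
  have hγ' : Continuous (deriv γ) := hγ.continuous_deriv le_rfl
  have hφd : Differentiable ℝ φ := hφ.differentiable one_ne_zero
  have hφ' : Continuous (deriv φ) := hφ.continuous_deriv le_rfl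
  set g : ℝ → ℂ := fun u => f (γ u) * deriv γ u / γ u with hg_def
  have hfγ : ContinuousOn (fun u => f (γ u)) (Set.Icc 0 1) :=
    (hf.mono Set.subset_union_left).comp hγ.continuous.continuousOn
      (Set.mapsTo_image _ _)
  have hgc : ContinuousOn g (Set.Icc 0 1) := by
    exact (hfγ.mul hγ'.continuousOn).div hγ.continuous.continuousOn
      (fun u _ => hγne u)
  -- chain rule for b ∘ γ
  have hbγ : ∀ t : ℝ, HasDerivAt (b ∘ γ) (deriv γ t • deriv b (γ t)) t := by
    intro t
    have hbd : DifferentiableAt ℂ b (γ t) :=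
      hb.differentiableAt (isOpen_compl_singleton.mem_nhds (hγne t))
    exact hbd.hasDerivAt.scomp t (hγd t).hasDerivAt
  -- the substitution: J = -I
  have hJ : (∫ t in (0:ℝ)..1, deriv b (γ t) * deriv γ t / b (γ t) * f (γ t))
      = -∫ t in (0:ℝ)..1, f (γ t) * deriv γ t / γ t := by
    have h1 : ∀ᵐ t : ℝ, t ≠ 1 := by
      refine MeasureTheory.ae_iff.mpr ?_
      simpa [not_ne_iff, Set.setOf_eq_eq_singleton] using Real.volume_singleton
    have heq : ∀ᵐ t : ℝ, t ∈ Set.uIoc (0:ℝ) 1 →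
        deriv b (γ t) * deriv γ t / b (γ t) * f (γ t)
          = deriv φ t • ((g ∘ φ) t) := by
      filter_upwards [h1] with t ht1 htmem
      rw [Set.uIoc_of_le (by norm_num : (0:ℝ) ≤ 1)] at htmem
      have hto : t ∈ Set.Ioo (0:ℝ) 1 := ⟨htmem.1, lt_of_le_of_ne htmem.2 ht1⟩
      have htI : t ∈ Set.Icc (0:ℝ) 1 := Set.Ioo_subset_Icc_self hto
      have hnhds : Set.Icc (0:ℝ) 1 ∈ nhds t := Icc_mem_nhds hto.1 hto.2
      have hev : (b ∘ γ) =ᶠ[nhds t] (γ ∘ φ) := by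
        filter_upwards [hnhds] with s hs
        exact hrev s hs
      have hd1 : deriv (b ∘ γ) t = deriv γ t • deriv b (γ t) := (hbγ t).deriv
      have hd2 : deriv (γ ∘ φ) t = deriv φ t • deriv γ (φ t) :=
        deriv.scomp t (hγd _) (hφd t)
      have hkey : deriv γ t • deriv b (γ t) = deriv φ t • deriv γ (φ t) := by
        rw [← hd1, ← hd2]; exact hev.deriv_eq
      have hb1 : b (γ t) = γ (φ t) := hrev t htI
      have hf1 : f (γ t) = f (γ (φ t)) := by rw [← hb1]; exact (hfb t htI).symm
      have hkey' : deriv γ t * deriv b (γ t) = (↑(deriv φ t) * deriv γ (φ t)) := by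
        simpa [smul_eq_mul, Complex.real_smul] using hkey
      simp only [Function.comp, hg_def, hb1, hf1, Complex.real_smul]
      rw [mul_comm (deriv b (γ t)) (deriv γ t), hkey']
      ring
    rw [intervalIntegral.integral_congr_ae heq]
    have hsub : (∫ t in (0:ℝ)..1, deriv φ t • ((g ∘ φ) t))
        = ∫ u in (φ 0)..(φ 1), g u := by
      refine intervalIntegral.integral_comp_smul_deriv'
        (fun x _ => (hφd x).hasDerivAt) hφ'.continuousOn ?_
      refine hgc.mono ?_
      rw [hIcc]
      exact Set.image_subset_iff.mpr hmaps
    rw [hsub, hφ0, hφ1, intervalIntegral.integral_symm]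
  -- split the RHS integral
  have hI1 : IntervalIntegrable (fun t => f (γ t) * deriv γ t / γ t)
      MeasureTheory.volume 0 1 := by
    apply ContinuousOn.intervalIntegrable
    rw [hIcc]; exact hgc
  have hderivb : ContinuousOn (deriv b) {(0:ℂ)}ᶜ :=
    ((hb.analyticOnNhd isOpen_compl_singleton).deriv).continuousOn
  have hI2 : IntervalIntegrable (fun t => deriv b (γ t) * deriv γ t / b (γ t) * f (γ t))
      MeasureTheory.volume 0 1 := by
    apply ContinuousOn.intervalIntegrable
    rw [hIcc]
    refine ContinuousOn.mul (ContinuousOn.div ?_ ?_ (fun t ht => hbne t ht)) hfγ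
    · exact (hderivb.comp hγ.continuous.continuousOn
        (fun t _ => hγne t)).mul hγ'.continuousOn
    · exact hb.continuousOn.comp hγ.continuous.continuousOn (fun t _ => hγne t)
  have hsplit : (∫ t in (0 : ℝ)..1,
        (deriv γ t / γ t - deriv b (γ t) * deriv γ t / b (γ t)) * f (γ t))
      = (∫ t in (0:ℝ)..1, f (γ t) * deriv γ t / γ t)
        - ∫ t in (0:ℝ)..1, deriv b (γ t) * deriv γ t / b (γ t) * f (γ t) := by
    rw [← intervalIntegral.integral_sub hI1 hI2]
    congr 1; ext t; ring
  rw [hsplit, hJ]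
  ring
end
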